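/- arXiv:1207.2888 — 2 statements merged into one kernel-verified Lean document; each statement's English description precedes it below -/
import Mathlib

section
/- Let E be a centrally orthocomplete generalized pseudoeffect algebra and let (e_i)_{i∈I} be a family of elements of E. Then (e_i)_{i∈I} is ΓEX-orthogonal if and only if γ_{e_i} ∧ γ_{e_j} = 0 in ΓEX(E) for all i,j ∈ I with i ≠ j. -/
/- Common framework: generalized pseudoeffect algebras (GPEAs), after
   Foulis, Pulmannová, Vinceková, "The exocenter and type decompositions for
   generalized pseudoeffect algebras".
   A partial binary operation ⊕ is represented by its graph
   `R : E → E → E → Prop`, where `R a b s` means "a ⊕ b is defined and equals s". -/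

universe u v

namespace GPEApaper

/-- Raw data of a partial algebra: the graph of a partial binary operation
together with a zero element. -/
structure PartialAlg (E : Type u) where
  R : E → E → E → Prop
  zero : E

namespace PartialAlg

variable {E : Type u} (A : PartialAlg E)

/-- The axioms (GPEA1)–(GPEA5) of a generalized pseudoeffect algebra,
including the functionality (well-definedness) of the partial operation. -/
def IsGPEA : Prop :=
  -- ⊕ is a partial operation (single-valued)
  (∀ a b c d : E, A.R a b c → A.R a b d → c = d) ∧
  -- (GPEA1) associativity, both directions
  (∀ a b c ab abc : E, A.R a b ab → A.R ab c abc → ∃ bc, A.R b c bc ∧ A.R a bc abc) ∧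
  (∀ a b c bc abc : E, A.R b c bc → A.R a bc abc → ∃ ab, A.R a b ab ∧ A.R ab c abc) ∧
  -- (GPEA2) conjugacy
  (∀ a b s : E, A.R a b s → (∃ d, A.R d a s) ∧ (∃ e, A.R b e s)) ∧
  -- (GPEA3) cancellation
  (∀ a b c s : E, A.R a b s → A.R a c s → b = c) ∧
  (∀ a b c s : E, A.R b a s → A.R c a s → b = c) ∧
  -- (GPEA4) positivity
  (∀ a b : E, A.R a b A.zero → a = A.zero ∧ b = A.zero) ∧
  -- (GPEA5) zero element
  (∀ a : E, A.R a A.zero a ∧ A.R A.zero a a)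

/-- a ⊕ b is defined. -/
def Defined (a b : E) : Prop := ∃ s, A.R a b s

/-- The induced partial order: a ≤ b iff a ⊕ x = b for some x. -/
def le (a b : E) : Prop := ∃ x, A.R a x b

/-- Orthogonality: p ⊥ q iff p ⊕ q and q ⊕ p both exist and are equal. -/
def perp (a b : E) : Prop := ∃ s, A.R a b s ∧ A.R b a s

/-- b is an upper bound of the set S. -/
def IsUB (S : Set E) (b : E) : Prop := ∀ a ∈ S, A.le a b

/-- s is the supremum (least upper bound) of the set S in (E, ≤). -/
def IsSup (S : Set E) (s : E) : Prop := A.IsUB S s ∧ ∀ b, A.IsUB S b → A.le s b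

/-- s is the infimum (greatest lower bound) of the set S in (E, ≤). -/
def IsInf (S : Set E) (s : E) : Prop :=
  (∀ a ∈ S, A.le s a) ∧ ∀ b, (∀ a ∈ S, A.le b a) → A.le b s

/-- An ideal of a GPEA. -/
def IsIdeal (I : Set E) : Prop :=
  I.Nonempty ∧ (∀ a ∈ I, ∀ b, A.le b a → b ∈ I) ∧
    ∀ a ∈ I, ∀ b ∈ I, ∀ s, A.R a b s → s ∈ I

/-- E = S ⊕ S′ : S and S′ are ideals, elements of S are orthogonal to elements
of S′, and every element of E has a unique decomposition a = a₁ ⊕ a₂ with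
a₁ ∈ S, a₂ ∈ S′. -/
def IsDirectSum (S S' : Set E) : Prop :=
  A.IsIdeal S ∧ A.IsIdeal S' ∧ (∀ a ∈ S, ∀ b ∈ S', A.perp a b) ∧
    ∀ a : E, ∃! p : E × E, p.1 ∈ S ∧ p.2 ∈ S' ∧ A.R p.1 p.2 a

/-- A central ideal (direct summand). -/
def IsCentralIdeal (S : Set E) : Prop := ∃ S', A.IsDirectSum S S'

/-- A normal ideal. -/
def IsNormalIdeal (I : Set E) : Prop :=
  A.IsIdeal I ∧ ∀ a x y s : E, A.R a x s → A.R y a s → (x ∈ I ↔ y ∈ I)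

/-- The axioms (EXC1)–(EXC4): π belongs to the exocenter ΓEX(E). -/
def IsExo (π : E → E) : Prop :=
  (∀ e f s, A.R e f s → A.R (π e) (π f) (π s)) ∧
  (∀ e, π (π e) = π e) ∧
  (∀ e, A.le (π e) e) ∧
  (∀ e f, π e = e → π f = A.zero → A.perp e f)

/-- For a ≤ b, `A.rdiv a b` is the element a/b, i.e. the unique x with
a ⊕ x = b (chosen by Hilbert choice when it exists). -/
noncomputable def rdiv (a b : E) : E :=
  letI : Nonempty E := ⟨A.zero⟩
  Classical.epsilon fun x => A.R a x b

/-- For π in the exocenter, π′ e := (π e)/e. -/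
noncomputable def exoCompl (π : E → E) : E → E := fun e => A.rdiv (π e) e

/-- The order on the exocenter: ξ ≤ π iff ξ = ξ ∘ π. -/
def exoLe (_A : PartialAlg E) (ξ π : E → E) : Prop := ξ = ξ ∘ π

/-- Disjointness in the boolean algebra ΓEX(E): the meet (= composition)
of ξ and π is the zero map. -/
def exoDisjoint (ξ π : E → E) : Prop := ∀ e, ξ (π e) = A.zero

/-- The join in the boolean algebra ΓEX(E): π ∨ ξ = (π′ ∘ ξ′)′. -/
noncomputable def exoSup (π ξ : E → E) : E → E :=
  A.exoCompl (A.exoCompl π ∘ A.exoCompl ξ)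

/-- σ is the least upper bound of a set S of exocenter elements,
with respect to the order of the boolean algebra ΓEX(E). -/
def IsExoLUB (S : Set (E → E)) (σ : E → E) : Prop :=
  A.IsExo σ ∧ (∀ π ∈ S, A.exoLe π σ) ∧
    ∀ β, A.IsExo β → (∀ π ∈ S, A.exoLe π β) → A.exoLe σ β

/-- A central element (C1)–(C4). -/
def Central (c : E) : Prop :=
  (∀ a : E, ∃ a₁ a₂, A.le a₁ c ∧ A.Defined a₂ c ∧ A.R a₁ a₂ a) ∧
  (∀ a b : E, A.le a c → A.Defined b c → A.perp a b) ∧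
  (∀ a b s : E, A.le a c → A.le b c → A.R a b s → A.le s c) ∧
  (∀ a b ab : E, A.Defined a c → A.Defined b c → A.R a b ab → A.Defined ab c)

/-- `A.ListSumsTo [e₁, …, eₙ] s` : the orthosum e₁ ⊕ (e₂ ⊕ (⋯ ⊕ eₙ)) is
defined and equals s (empty orthosum is 0). -/
def ListSumsTo (A : PartialAlg E) : List E → E → Prop
  | [], s => s = A.zero
  | a :: l, s => ∃ t, A.ListSumsTo l t ∧ A.R a t s

/-- The finite subfamily indexed by F is orthogonal with orthosum s:
every enumeration of F yields the orthosum s. -/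
def FinsetSumsTo {ι : Type v} (e : ι → E) (F : Finset ι) (s : E) : Prop :=
  ∀ l : List ι, l.Nodup →
    (letI : DecidableEq ι := Classical.decEq ι; l.toFinset) = F →
    A.ListSumsTo (l.map e) s

/-- A family is orthogonal iff every finite subfamily is orthogonal
(all enumerations have a common orthosum). -/
def IsOrthogonal {ι : Type v} (e : ι → E) : Prop :=
  ∀ F : Finset ι, ∃ s, A.FinsetSumsTo e F s

/-- A family is orthosummable with orthosum s iff it is orthogonal and s is
the supremum of its finite partial orthosums. -/
def IsOrthosum {ι : Type v} (e : ι → E) (s : E) : Prop :=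
  A.IsOrthogonal e ∧ A.IsSup {t | ∃ F : Finset ι, A.FinsetSumsTo e F t} s

/-- A family (eᵢ) is ΓEX-orthogonal iff there is a pairwise disjoint family
(πᵢ) in the exocenter with πᵢ eᵢ = eᵢ for all i. -/
def GEXOrthogonal {ι : Type v} (e : ι → E) : Prop :=
  ∃ π : ι → E → E, (∀ i, A.IsExo (π i)) ∧
    (∀ i j, i ≠ j → A.exoDisjoint (π i) (π j)) ∧ ∀ i, π i (e i) = e i

/-- E is centrally orthocomplete: (CO1) every ΓEX-orthogonal family is
orthosummable, and (CO2) orthosums respect one-sided summability. -/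
def IsCOGPEA : Prop :=
  (∀ {ι : Type u} (e : ι → E), A.GEXOrthogonal e → ∃ s, A.IsOrthosum e s) ∧
  (∀ {ι : Type u} (e : ι → E) (s : E), A.GEXOrthogonal e → A.IsOrthosum e s →
    ∀ a : E, ((∀ i, A.Defined a (e i)) → A.Defined a s) ∧
             ((∀ i, A.Defined (e i) a) → A.Defined s a))

/-- γ is the exocentral cover of e: the smallest element of ΓEX(E) fixing e. -/
def IsExoCover (e : E) (γ : E → E) : Prop :=
  A.IsExo γ ∧ γ e = e ∧ ∀ π, A.IsExo π → π e = e → A.exoLe γ π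

/-- The restriction of the partial algebra to a subset containing 0 (with the
operation defined whenever it is defined in E and the result lies in the subset). -/
def restrictSet (S : Set E) (h0 : A.zero ∈ S) : PartialAlg S where
  R a b s := A.R a.1 b.1 s.1
  zero := ⟨A.zero, h0⟩

/-- The axioms (PEA1)–(PEA4) of a pseudoeffect algebra with unit `one`
(including single-valuedness of the partial operation). -/
def IsPEA (one : E) : Prop :=
  (∀ a b c d : E, A.R a b c → A.R a b d → c = d) ∧
  -- (PEA1)
  (∀ a b c ab abc : E, A.R a b ab → A.R ab c abc → ∃ bc, A.R b c bc ∧ A.R a bc abc) ∧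
  (∀ a b c bc abc : E, A.R b c bc → A.R a bc abc → ∃ ab, A.R a b ab ∧ A.R ab c abc) ∧
  -- (PEA2)
  (∀ a : E, ∃! d, A.R a d one) ∧
  (∀ a : E, ∃! e, A.R e a one) ∧
  -- (PEA3)
  (∀ a b s : E, A.R a b s → (∃ d, A.R d a s) ∧ (∃ e, A.R b e s)) ∧
  -- (PEA4)
  (∀ a s : E, A.R one a s ∨ A.R a one s → a = A.zero)

end PartialAlg

end GPEApaper

namespace GPEApaper
namespace PartialAlg

variable {E : Type u} {A : PartialAlg E}

/-- Antisymmetry of the induced order in a GPEA. -/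
theorem le_antisymm_aux (hA : A.IsGPEA) {a b : E} (hab : A.le a b) (hba : A.le b a) :
    a = b := by
  obtain ⟨hfun, hassoc1, hassoc2, hconj, hcancL, hcancR, hpos, hzero⟩ := hA
  obtain ⟨x, hx⟩ := hab
  obtain ⟨y, hy⟩ := hba
  obtain ⟨xy, hxy, haxy⟩ := hassoc1 a x y b a hx hy
  have hxy0 : xy = A.zero := hcancL a xy A.zero a haxy (hzero a).1
  subst hxy0
  obtain ⟨hx0, hy0⟩ := hpos x y hxy
  subst hx0
  exact (hfun a A.zero b a hx (hzero a).1).symm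

/-- If an exocenter map fixes b, it fixes everything below b. -/
theorem exo_fix_down (hA : A.IsGPEA) {π : E → E} (hπ : A.IsExo π) {a b : E}
    (hab : A.le a b) (hb : π b = b) : π a = a := by
  obtain ⟨hfun, hassoc1, hassoc2, hconj, hcancL, hcancR, hpos, hzero⟩ := hA
  obtain ⟨hEX1, hEX2, hEX3, hEX4⟩ := hπ
  obtain ⟨u, hu⟩ := hab
  obtain ⟨w, hw⟩ := hEX3 a
  have h1 : A.R (π a) (π u) b := by
    have := hEX1 a u b hu
    rwa [hb] at this
  obtain ⟨wu, hwu, h2⟩ := hassoc1 (π a) w u a b hw hu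
  have h3 : π u = wu := hcancL (π a) (π u) wu b h1 h2
  rw [← h3] at hwu
  -- hwu : A.R w u (π u)
  obtain ⟨v, hv⟩ := hEX3 u
  obtain ⟨uv, huv, h4⟩ := hassoc1 w u v (π u) u hwu hv
  have huvu : uv = u := by
    apply le_antisymm_aux ⟨hfun, hassoc1, hassoc2, hconj, hcancL, hcancR, hpos, hzero⟩
    · exact (hconj w uv u h4).2
    · exact ⟨v, huv⟩
  subst huvu
  have hv0 : v = A.zero := hcancL uv v A.zero uv huv (hzero uv).1
  subst hv0
  have hu_eq' : uv = π uv := hfun (π uv) A.zero uv (π uv) hv (hzero (π uv)).1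
  rw [← hu_eq'] at hwu
  have hw0 : w = A.zero := hcancR uv w A.zero uv hwu (hzero uv).2
  subst hw0
  exact (hfun (π a) A.zero a (π a) hw (hzero (π a)).1).symm

/-- An exocenter map sends 0 to 0. -/
theorem exo_zero (hA : A.IsGPEA) {π : E → E} (hπ : A.IsExo π) : π A.zero = A.zero := by
  obtain ⟨x, hx⟩ := hπ.2.2.1 A.zero
  exact (hA.2.2.2.2.2.2.1 _ _ hx).1

end PartialAlg
end GPEApaper

open GPEApaper PartialAlg in
/-- Theorem 6.7: in a COGPEA, a family (eᵢ) is ΓEX-orthogonal iff the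
exocentral covers γ_{eᵢ} are pairwise disjoint in ΓEX(E). -/
theorem stmt_18 {E : Type u} (A : PartialAlg E) (hA : A.IsGPEA)
    (hCO : A.IsCOGPEA) (γ : E → E → E)
    (hγ : ∀ a : E, A.IsExoCover a (γ a))
    {ι : Type v} (e : ι → E) :
    A.GEXOrthogonal e ↔
      ∀ i j, i ≠ j → A.exoDisjoint (γ (e i)) (γ (e j)) := by
  constructor
  · rintro ⟨π, hπexo, hπdis, hπfix⟩ i j hij x
    have hlei : A.exoLe (γ (e i)) (π i) := (hγ (e i)).2.2 (π i) (hπexo i) (hπfix i)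
    have hlej : A.exoLe (γ (e j)) (π j) := (hγ (e j)).2.2 (π j) (hπexo j) (hπfix j)
    have hgj : γ (e j) x = γ (e j) (π j x) := congrFun hlej x
    have hfix : π j (γ (e j) x) = γ (e j) x := by
      rw [hgj]
      exact exo_fix_down hA (hπexo j) ((hγ (e j)).1.2.2.1 (π j x)) ((hπexo j).2.1 x)
    calc γ (e i) (γ (e j) x) = γ (e i) (π i (γ (e j) x)) := congrFun hlei _
      _ = γ (e i) (π i (π j (γ (e j) x))) := by rw [hfix]
      _ = γ (e i) A.zero := by rw [hπdis i j hij (γ (e j) x)]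
      _ = A.zero := exo_zero hA (hγ (e i)).1
  · intro h
    exact ⟨fun i => γ (e i), fun i => (hγ (e i)).1, h, fun i => (hγ (e i)).2.1⟩
end

section
/- Let K be a type-determining subset of a centrally orthocomplete generalized pseudoeffect algebra E. Then there exist unique pairwise disjoint mappings π₁, π₂, π₃ in ΓEX(E), namely π₁ = γ_K̃, π₂ = γ_K ∧ (γ_K̃)′, and π₃ = (γ_K)′, such that: (i) π₁ ∨ π₂ ∨ π₃ = 1, so that E = π₁(E) ⊕ π₂(E) ⊕ π₃(E), and (ii) π₁ is type-K, π₂ is locally type-K but properly non-K, and π₃ is purely non-K. -/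
/- Common framework: generalized pseudoeffect algebras (GPEAs), after
   Foulis, Pulmannová, Vinceková, "The exocenter and type decompositions for
   generalized pseudoeffect algebras".
   A partial binary operation ⊕ is represented by its graph
   `R : E → E → E → Prop`, where `R a b s` means "a ⊕ b is defined and equals s". -/

universe u v

namespace GPEApaper

namespace PartialAlg

variable {E : Type u} (A : PartialAlg E)

/-- [Q]_γ : the set of all orthosums (suprema) of ΓEX-orthogonal (γ-orthogonal)
families of elements of Q (the empty family contributing 0). -/
def gammaClosure (Q : Set E) : Set E :=
  {s : E | ∃ (ι : Type u) (e : ι → E),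
    (∀ i, e i ∈ Q) ∧ A.GEXOrthogonal e ∧ A.IsOrthosum e s}

/-- Q^γ := {γ_e q : e ∈ E, q ∈ Q}, for a cover system γ. -/
def gammaSet (_A : PartialAlg E) (γ : E → E → E) (Q : Set E) : Set E :=
  {x : E | ∃ a q, q ∈ Q ∧ x = γ a q}

/-- K is type-determining: K = [K]_γ = K^γ. -/
def IsTD (γ : E → E → E) (K : Set E) : Prop :=
  K = A.gammaClosure K ∧ K = A.gammaSet γ K

/-- The conjunction of conditions (i) and (ii) of the fundamental decomposition
theorem for the triple (π₁, π₂, π₃): they are pairwise disjoint elements of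
ΓEX(E) with join 1 (so E = π₁(E) ⊕ π₂(E) ⊕ π₃(E)), π₁ is type-K, π₂ is
locally type-K but properly non-K, and π₃ is purely non-K.  Here γ is the
exocentral cover system and gK = γ_K, gKt = γ_K̃ . -/
def TDDecompProp (γ : E → E → E) (K : Set E) (gK gKt : E → E)
    (π₁ π₂ π₃ : E → E) : Prop :=
  A.IsExo π₁ ∧ A.IsExo π₂ ∧ A.IsExo π₃ ∧
  A.exoDisjoint π₁ π₂ ∧ A.exoDisjoint π₁ π₃ ∧ A.exoDisjoint π₂ π₃ ∧
  -- (i): π₁ ∨ π₂ ∨ π₃ = 1 …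
  A.exoSup π₁ (A.exoSup π₂ π₃) = id ∧
  -- … so that E = π₁(E) ⊕ π₂(E) ⊕ π₃(E)
  (∀ a : E, ∃! t : E × E × E, t.1 ∈ Set.range π₁ ∧ t.2.1 ∈ Set.range π₂ ∧
    t.2.2 ∈ Set.range π₃ ∧ ∃ m : E, A.R t.1 t.2.1 m ∧ A.R m t.2.2 a) ∧
  -- (ii): π₁ is type-K (π₁ = γ_k for some k ∈ K̃ = K ∩ Γ(E))
  (∃ k, (k ∈ K ∧ A.Central k) ∧ π₁ = γ k) ∧
  -- π₂ is locally type-K (π₂ = γ_k for some k ∈ K) but properly non-K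
  (∃ k ∈ K, π₂ = γ k) ∧ A.exoDisjoint π₂ gKt ∧
  -- π₃ is purely non-K
  A.exoDisjoint π₃ gK

end PartialAlg

end GPEApaper

/-!
The maps of `ΓEX(E)` commute, are idempotent and additive, and `π ↦ π′` is a complementation,
so pointwise arguments give the boolean-algebra facts needed here. Because `K = K^γ`, `K` is
closed under every `π ∈ ΓEX(E)` (as `π q = γ_{π q} q`), and because `K = [K]_γ` it is closed
under γ-orthogonal orthosums; the same holds for `K̃`, since exocentral maps and γ-orthogonal
orthosums preserve centrality. For such a set a Zorn argument on subsets with pairwise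
disjoint covers produces a single element whose cover is the supremum of all covers, so
`γ_K = γ_k` with `k ∈ K` and `γ_K̃ = γ_{k̃}` with `k̃ ∈ K̃`. Then `γ_K̃ ≤ γ_K`, and
`(γ_K̃, γ_K ∧ γ_K̃′, γ_K′)` is a partition of `1` with the required types, `γ_K ∧ γ_K̃′`
being the cover of `γ_K̃′ k`. Uniqueness: a partition `(q₁, q₂, q₃)` of `1` with
`q₁ ≤ γ_K̃`, `q₂ ≤ γ_K`, `q₂ ∧ γ_K̃ = 0` and `q₃ ∧ γ_K = 0` is forced, since a map disjoint
from two members of a partition lies below the third.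
-/

namespace GPEApaper.PartialAlg

variable {E : Type u} {A : PartialAlg E}

theorem perp_comm {a b : E} (h : A.perp a b) : A.perp b a :=
  let ⟨s, h1, h2⟩ := h; ⟨s, h2, h1⟩

namespace IsGPEA

variable (hA : A.IsGPEA)
include hA

theorem R_unique {a b c d : E} (h1 : A.R a b c) (h2 : A.R a b d) : c = d :=
  hA.1 _ _ _ _ h1 h2

theorem exists_assoc_right {a b c ab abc : E} (h1 : A.R a b ab) (h2 : A.R ab c abc) :
    ∃ bc, A.R b c bc ∧ A.R a bc abc :=
  hA.2.1 _ _ _ _ _ h1 h2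

theorem exists_assoc_left {a b c bc abc : E} (h1 : A.R b c bc) (h2 : A.R a bc abc) :
    ∃ ab, A.R a b ab ∧ A.R ab c abc :=
  hA.2.2.1 _ _ _ _ _ h1 h2

theorem exists_R_left {a b s : E} (h : A.R a b s) : ∃ d, A.R d a s :=
  (hA.2.2.2.1 _ _ _ h).1

theorem exists_R_right {a b s : E} (h : A.R a b s) : ∃ e, A.R b e s :=
  (hA.2.2.2.1 _ _ _ h).2

theorem cancel_left {a b c s : E} (h1 : A.R a b s) (h2 : A.R a c s) : b = c :=
  hA.2.2.2.2.1 _ _ _ _ h1 h2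

theorem cancel_right {a b c s : E} (h1 : A.R b a s) (h2 : A.R c a s) : b = c :=
  hA.2.2.2.2.2.1 _ _ _ _ h1 h2

theorem eq_zero_of_R_zero {a b : E} (h : A.R a b A.zero) : a = A.zero ∧ b = A.zero :=
  hA.2.2.2.2.2.2.1 _ _ h

theorem R_zero_right (a : E) : A.R a A.zero a := (hA.2.2.2.2.2.2.2 a).1

theorem R_zero_left (a : E) : A.R A.zero a a := (hA.2.2.2.2.2.2.2 a).2

theorem eq_of_R_zero_right {a s : E} (h : A.R a A.zero s) : s = a :=
  hA.R_unique h (hA.R_zero_right a)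

theorem eq_of_R_zero_left {b s : E} (h : A.R A.zero b s) : s = b :=
  hA.R_unique h (hA.R_zero_left b)

theorem eq_zero_of_R_self_left {a t : E} (h : A.R a t a) : t = A.zero :=
  hA.cancel_left h (hA.R_zero_right a)

theorem eq_zero_of_R_self_right {a t : E} (h : A.R t a a) : t = A.zero :=
  hA.cancel_right h (hA.R_zero_left a)

theorem le_refl (a : E) : A.le a a := ⟨A.zero, hA.R_zero_right a⟩

theorem zero_le (a : E) : A.le A.zero a := ⟨a, hA.R_zero_left a⟩

theorem eq_zero_of_le_zero {a : E} (h : A.le a A.zero) : a = A.zero :=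
  let ⟨_, hx⟩ := h; (hA.eq_zero_of_R_zero hx).1

omit hA in
theorem le_of_R_left {a b s : E} (h : A.R a b s) : A.le a s := ⟨b, h⟩

theorem le_of_R_right {a b s : E} (h : A.R a b s) : A.le b s :=
  hA.exists_R_right h

theorem le_trans {a b c : E} (h1 : A.le a b) (h2 : A.le b c) : A.le a c := by
  obtain ⟨x, hx⟩ := h1
  obtain ⟨y, hy⟩ := h2
  obtain ⟨xy, -, h⟩ := hA.exists_assoc_right hx hy
  exact ⟨xy, h⟩

theorem le_antisymm {a b : E} (h1 : A.le a b) (h2 : A.le b a) : a = b := by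
  obtain ⟨x, hx⟩ := h1
  obtain ⟨y, hy⟩ := h2
  obtain ⟨xy, hxy, h⟩ := hA.exists_assoc_right hx hy
  rw [hA.eq_zero_of_R_self_left h] at hxy
  rw [(hA.eq_zero_of_R_zero hxy).1] at hx
  exact hA.R_unique (hA.R_zero_right a) hx

theorem defined_of_le_right {a b c : E} (h : A.Defined a b) (hc : A.le c b) :
    A.Defined a c := by
  obtain ⟨s, hs⟩ := h
  obtain ⟨y, hy⟩ := hc
  obtain ⟨ac, hac, -⟩ := hA.exists_assoc_left hy hs
  exact ⟨ac, hac⟩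

theorem defined_of_le_left {a b c : E} (h : A.Defined a b) (hc : A.le c a) :
    A.Defined c b := by
  obtain ⟨s, hs⟩ := h
  obtain ⟨y, hy⟩ := hc
  obtain ⟨yb, hyb, hs'⟩ := hA.exists_assoc_right hy hs
  exact hA.defined_of_le_right ⟨s, hs'⟩ (hA.le_of_R_right hyb)

theorem add_le_add_left {a b b' s s' : E} (h : A.R a b s) (h' : A.R a b' s')
    (hb : A.le b b') : A.le s s' := by
  obtain ⟨y, hy⟩ := hb
  obtain ⟨ab, hab, hs'⟩ := hA.exists_assoc_left hy h'
  rw [hA.R_unique hab h] at hs'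
  exact ⟨y, hs'⟩

theorem add_le_add_right {a a' b s s' : E} (h : A.R a b s) (h' : A.R a' b s')
    (ha : A.le a a') : A.le s s' := by
  obtain ⟨x, hx⟩ := ha
  obtain ⟨xb, hxb, hs'⟩ := hA.exists_assoc_right hx h'
  obtain ⟨x', hx'⟩ := hA.exists_R_right hxb
  obtain ⟨ab, hab, hs''⟩ := hA.exists_assoc_left hx' hs'
  rw [hA.R_unique hab h] at hs''
  exact ⟨x', hs''⟩

theorem add_le_add {a a' b b' s s' : E} (h : A.R a b s) (h' : A.R a' b' s')
    (ha : A.le a a') (hb : A.le b b') : A.le s s' := by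
  obtain ⟨t, ht⟩ := hA.defined_of_le_left ⟨s', h'⟩ ha
  exact hA.le_trans (hA.add_le_add_left h ht hb) (hA.add_le_add_right ht h' ha)

theorem le_of_add_le_add_left {b t e u v : E} (hu : A.R b t u) (hv : A.R b e v)
    (h : A.le u v) : A.le t e := by
  obtain ⟨z, hz⟩ := h
  obtain ⟨tz, htz, hv'⟩ := hA.exists_assoc_right hu hz
  exact ⟨z, hA.cancel_left hv' hv ▸ htz⟩

theorem le_of_add_le_add_right {b t d u v : E} (hu : A.R t b u) (hv : A.R d b v)
    (h : A.le u v) : A.le t d := by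
  obtain ⟨z, hz⟩ := h
  obtain ⟨bz, hbz, hv'⟩ := hA.exists_assoc_right hu hz
  obtain ⟨z', hz'⟩ := hA.exists_R_left hbz
  obtain ⟨tz, htz, hv''⟩ := hA.exists_assoc_left hz' hv'
  exact ⟨z', hA.cancel_right hv'' hv ▸ htz⟩

theorem perp_zero (a : E) : A.perp a A.zero := ⟨a, hA.R_zero_right a, hA.R_zero_left a⟩

/-- `(p ⊕ q) ⊕ (a ⊕ b) = (p ⊕ a) ⊕ (q ⊕ b)` when `q ⊥ a`. -/
theorem R_interchange {p q a b e f P Q s : E} (hpq : A.R p q e) (hab : A.R a b f)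
    (hpa : A.R p a P) (hqb : A.R q b Q) (hqa : A.perp q a) (hPQ : A.R P Q s) :
    A.R e f s := by
  obtain ⟨aQ, haQ, hs⟩ := hA.exists_assoc_right hpa hPQ
  obtain ⟨qa, hqa', haQ'⟩ := hA.exists_assoc_left hqb haQ
  obtain ⟨w, hqa₁, hqa₂⟩ := hqa
  rw [hA.R_unique hqa' hqa₂] at haQ'
  obtain ⟨ab', hab', hqf⟩ := hA.exists_assoc_right hqa₁ haQ'
  rw [hA.R_unique hab' hab] at hqf
  obtain ⟨pq, hpq', hs'⟩ := hA.exists_assoc_left hqf hs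
  rwa [hA.R_unique hpq' hpq] at hs'

end IsGPEA

namespace IsExo

variable {π : E → E} (hπ : A.IsExo π)
include hπ

theorem map_R {e f s : E} (h : A.R e f s) : A.R (π e) (π f) (π s) := hπ.1 _ _ _ h

theorem idem (e : E) : π (π e) = π e := hπ.2.1 e

theorem apply_le (e : E) : A.le (π e) e := hπ.2.2.1 e

theorem R_exoCompl (e : E) : A.R (π e) (A.exoCompl π e) e :=
  Classical.epsilon_spec (p := fun x => A.R (π e) x e) (hπ.apply_le e)

theorem perp_of_fix_of_kill {e f : E} (he : π e = e) (hf : π f = A.zero) : A.perp e f :=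
  hπ.2.2.2 e f he hf

theorem exoLe_refl : A.exoLe π π := funext fun e => (hπ.idem e).symm

theorem map_perp {x y : E} (h : A.perp x y) : A.perp (π x) (π y) :=
  let ⟨s, h1, h2⟩ := h; ⟨π s, hπ.map_R h1, hπ.map_R h2⟩

theorem map_defined {x y : E} (h : A.Defined x y) : A.Defined (π x) (π y) :=
  let ⟨s, hs⟩ := h; ⟨π s, hπ.map_R hs⟩

theorem le_map_of_le {a b : E} (h : A.le a b) : A.le (π a) (π b) :=
  let ⟨x, hx⟩ := h; ⟨π x, hπ.map_R hx⟩

end IsExo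

namespace IsGPEA

variable (hA : A.IsGPEA) {π ξ : E → E}
include hA

theorem exo_map_zero (hπ : A.IsExo π) : π A.zero = A.zero :=
  hA.eq_zero_of_le_zero (hπ.apply_le A.zero)

theorem exo_fix_of_le (hπ : A.IsExo π) {x b : E} (hx : A.le x b) (hb : π b = b) :
    π x = x := by
  obtain ⟨y, hy⟩ := hx
  have hy' : A.R (π x) (π y) b := hb ▸ hπ.map_R hy
  obtain ⟨d, hd⟩ := hπ.apply_le x
  obtain ⟨dy, hdy, hb'⟩ := hA.exists_assoc_right hd hy
  rw [hA.cancel_left hb' hy'] at hdy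
  have hyfix : π y = y := hA.le_antisymm (hπ.apply_le y) (hA.le_of_R_right hdy)
  rw [hyfix] at hdy
  rw [hA.eq_zero_of_R_self_right hdy] at hd
  exact (hA.eq_of_R_zero_right hd).symm

theorem exo_fix_of_R (hπ : A.IsExo π) {a b s : E} (ha : π a = a) (hb : π b = b)
    (h : A.R a b s) : π s = s := by
  have hs := hπ.map_R h
  rw [ha, hb] at hs
  exact hA.R_unique hs h

theorem exo_kill_of_R (hπ : A.IsExo π) {a b s : E} (ha : π a = A.zero)
    (hb : π b = A.zero) (h : A.R a b s) : π s = A.zero := by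
  have hs := hπ.map_R h
  rw [ha, hb] at hs
  exact hA.eq_of_R_zero_left hs

theorem exo_exoCompl (hπ : A.IsExo π) (e : E) : π (A.exoCompl π e) = A.zero := by
  have h := hπ.map_R (hπ.R_exoCompl e)
  rw [hπ.idem] at h
  exact hA.eq_zero_of_R_self_left h

theorem R_exoCompl_swap (hπ : A.IsExo π) (e : E) : A.R (A.exoCompl π e) (π e) e := by
  obtain ⟨s, h1, h2⟩ := hπ.perp_of_fix_of_kill (hπ.idem e) (hA.exo_exoCompl hπ e)
  rwa [hA.R_unique h1 (hπ.R_exoCompl e)] at h2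

theorem exoCompl_eq_self (hπ : A.IsExo π) {x : E} (h : π x = A.zero) :
    A.exoCompl π x = x := by
  have hx := hπ.R_exoCompl x
  rw [h] at hx
  exact (hA.eq_of_R_zero_left hx).symm

theorem exoCompl_eq_zero (hπ : A.IsExo π) {x : E} (h : π x = x) :
    A.exoCompl π x = A.zero := by
  have hx := hπ.R_exoCompl x
  rw [h] at hx
  exact hA.eq_zero_of_R_self_left hx

theorem exoCompl_eq_self_iff (hπ : A.IsExo π) {x : E} :
    A.exoCompl π x = x ↔ π x = A.zero := by
  refine ⟨fun h => ?_, hA.exoCompl_eq_self hπ⟩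
  have hx := hπ.R_exoCompl x
  rw [h] at hx
  exact hA.eq_zero_of_R_self_right hx

theorem exoCompl_eq_zero_iff (hπ : A.IsExo π) {x : E} :
    A.exoCompl π x = A.zero ↔ π x = x := by
  refine ⟨fun h => ?_, hA.exoCompl_eq_zero hπ⟩
  have hx := hπ.R_exoCompl x
  rw [h] at hx
  exact (hA.eq_of_R_zero_right hx).symm

theorem exoCompl_map_R (hπ : A.IsExo π) {e f s : E} (h : A.R e f s) :
    A.R (A.exoCompl π e) (A.exoCompl π f) (A.exoCompl π s) := by
  obtain ⟨t, hft, het⟩ := hA.exists_assoc_right (hπ.R_exoCompl e) h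
  obtain ⟨w, hw, hft'⟩ := hA.exists_assoc_left (hπ.R_exoCompl f) hft
  obtain ⟨v, hv₁, hv₂⟩ := hπ.perp_of_fix_of_kill (hπ.idem f) (hA.exo_exoCompl hπ e)
  rw [hA.R_unique hv₂ hw] at hv₁
  obtain ⟨z, hz, hft''⟩ := hA.exists_assoc_right hv₁ hft'
  obtain ⟨ef, hef, hs⟩ := hA.exists_assoc_left hft'' het
  rw [hA.R_unique hef (hπ.map_R h)] at hs
  rwa [hA.cancel_left hs (hπ.R_exoCompl s)] at hz

theorem isExo_exoCompl (hπ : A.IsExo π) : A.IsExo (A.exoCompl π) :=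
  ⟨fun _ _ _ => hA.exoCompl_map_R hπ,
    fun e => hA.exoCompl_eq_self hπ (hA.exo_exoCompl hπ e),
    fun e => le_of_R_left (hA.R_exoCompl_swap hπ e),
    fun _ _ he hf => perp_comm <| hπ.perp_of_fix_of_kill
      ((hA.exoCompl_eq_zero_iff hπ).1 hf) ((hA.exoCompl_eq_self_iff hπ).1 he)⟩

theorem exoCompl_exoCompl (hπ : A.IsExo π) : A.exoCompl (A.exoCompl π) = π :=
  funext fun e => hA.cancel_left ((hA.isExo_exoCompl hπ).R_exoCompl e)
    (hA.R_exoCompl_swap hπ e)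

/-- Apply `π ∘ ξ` to `e = π e ⊕ π' e`: `ξ (π e) ≤ π e` is fixed by `π`, and
`ξ (π' e) ≤ π' e` is killed by `π`. -/
theorem exo_comm (hπ : A.IsExo π) (hξ : A.IsExo ξ) (e : E) : π (ξ e) = ξ (π e) := by
  have h := hπ.map_R (hξ.map_R (hπ.R_exoCompl e))
  have hkill : π (ξ (A.exoCompl π e)) = A.zero := hA.eq_zero_of_le_zero <|
    hA.exo_exoCompl hπ e ▸ hπ.le_map_of_le (hξ.apply_le _)
  rw [hkill, hA.exo_fix_of_le hπ (hξ.apply_le (π e)) (hπ.idem e)] at h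
  exact hA.eq_of_R_zero_right h

/-- Split `e = ξ e ⊕ ξ' e` and `f = a ⊕ b`; the `ξ`-parts and the `ξ'`-parts are summed
separately, and the two sums are orthogonal by (EXC4). -/
theorem perp_of_perp_of_R (hξ : A.IsExo ξ) {a b f e : E} (ha : ξ a = a)
    (hb : ξ b = A.zero) (hf : A.R a b f) (hea : A.perp e a) (heb : A.perp e b) :
    A.perp e f := by
  have hξ' := hA.isExo_exoCompl hξ
  obtain ⟨P, hpa, hap⟩ := ha ▸ hξ.map_perp hea
  obtain ⟨Q, hqb, hbq⟩ := hA.exoCompl_eq_self hξ hb ▸ hξ'.map_perp heb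
  have hP : ξ P = P := hA.exo_fix_of_R hξ (hξ.idem e) ha hpa
  have hQ : ξ Q = A.zero := hA.exo_kill_of_R hξ (hA.exo_exoCompl hξ e) hb hqb
  obtain ⟨s, hPQ, hQP⟩ := hξ.perp_of_fix_of_kill hP hQ
  have hqa := perp_comm <| hξ.perp_of_fix_of_kill ha (hA.exo_exoCompl hξ e)
  have hbp := perp_comm <| hξ.perp_of_fix_of_kill (hξ.idem e) hb
  exact ⟨s, hA.R_interchange (hξ.R_exoCompl e) hf hpa hqb hqa hPQ,
    hA.R_interchange hf (hξ.R_exoCompl e) hap hbq hbp hPQ⟩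

end IsGPEA

theorem exoLe.apply_eq {ξ π : E → E} (h : A.exoLe ξ π) (x : E) : ξ x = ξ (π x) :=
  congrFun h x

theorem exoLe_trans {ξ π τ : E → E} (h₁ : A.exoLe ξ π) (h₂ : A.exoLe π τ) :
    A.exoLe ξ τ :=
  funext fun x => by rw [h₁.apply_eq, h₂.apply_eq, ← h₁.apply_eq]; rfl

theorem exoLe_comp_right {π ξ : E → E} (hξ : A.IsExo ξ) : A.exoLe (π ∘ ξ) ξ :=
  funext fun x => by simp only [Function.comp_apply, hξ.idem]

theorem exoCompl_congr {π ξ : E → E} {x : E} (h : π x = ξ x) :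
    A.exoCompl π x = A.exoCompl ξ x := by
  simp only [exoCompl, h]

namespace IsGPEA

variable (hA : A.IsGPEA) {π ξ σ : E → E}
include hA

theorem isExo_comp (hπ : A.IsExo π) (hξ : A.IsExo ξ) : A.IsExo (π ∘ ξ) := by
  refine ⟨fun _ _ _ h => hπ.map_R (hξ.map_R h), fun e => ?_,
    fun e => hA.le_trans (hπ.apply_le (ξ e)) (hξ.apply_le e), fun x y hx hy => ?_⟩
  · change π (ξ (π (ξ e))) = π (ξ e)
    rw [hA.exo_comm hξ hπ, hξ.idem, hπ.idem]
  · have hxπ : π x = x := hx ▸ hπ.idem (ξ x)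
    have hx' : π (ξ x) = x := hx
    have hxξ : ξ x = x := by
      conv_lhs => rw [← hx']
      rw [hA.exo_comm hξ hπ, hξ.idem, hx']
    exact hA.perp_of_perp_of_R hξ (hξ.idem y) (hA.exo_exoCompl hξ y) (hξ.R_exoCompl y)
      (hπ.perp_of_fix_of_kill hxπ hy) (hξ.perp_of_fix_of_kill hxξ (hA.exo_exoCompl hξ y))

theorem exoLe_antisymm (hπ : A.IsExo π) (hξ : A.IsExo ξ) (h₁ : A.exoLe ξ π)
    (h₂ : A.exoLe π ξ) : ξ = π :=
  funext fun x => calc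
    ξ x = ξ (π x) := h₁.apply_eq x
    _ = π (ξ x) := hA.exo_comm hξ hπ x
    _ = π x := (h₂.apply_eq x).symm

theorem exoLe_iff (hπ : A.IsExo π) (hξ : A.IsExo ξ) :
    A.exoLe ξ π ↔ ∀ x, ξ (A.exoCompl π x) = A.zero := by
  constructor
  · intro h x
    rw [h.apply_eq, hA.exo_exoCompl hπ, hA.exo_map_zero hξ]
  · intro h
    funext x
    have hx := hξ.map_R (hπ.R_exoCompl x)
    rw [h x] at hx
    exact hA.eq_of_R_zero_right hx

theorem exoLe_comp_left (hπ : A.IsExo π) (hξ : A.IsExo ξ) : A.exoLe (π ∘ ξ) π :=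
  funext fun x => by simp only [Function.comp_apply, hA.exo_comm hξ hπ, hπ.idem]

theorem exoDisjoint_exoCompl_self (hπ : A.IsExo π) : A.exoDisjoint (A.exoCompl π) π :=
  fun x => hA.exoCompl_eq_zero hπ (hπ.idem x)

theorem exoDisjoint_comm (hξ : A.IsExo ξ) (hπ : A.IsExo π) (h : A.exoDisjoint ξ π) :
    A.exoDisjoint π ξ :=
  fun x => hA.exo_comm hπ hξ x ▸ h x

theorem exoLe_exoCompl_iff (hπ : A.IsExo π) (hξ : A.IsExo ξ) :
    A.exoLe ξ (A.exoCompl π) ↔ A.exoDisjoint ξ π := by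
  rw [hA.exoLe_iff (hA.isExo_exoCompl hπ) hξ, hA.exoCompl_exoCompl hπ]
  rfl

theorem exoDisjoint_mono {ξ' π' : E → E} (hξ : A.IsExo ξ) (hπ : A.IsExo π)
    (hξ' : A.IsExo ξ') (h : A.exoDisjoint ξ' π') (hξle : A.exoLe ξ ξ') (hπle : A.exoLe π π') :
    A.exoDisjoint ξ π := by
  intro x
  rw [hξle.apply_eq, hπle.apply_eq, hA.exo_comm hξ' hπ, h x, hA.exo_map_zero hπ,
    hA.exo_map_zero hξ]

theorem exoCompl_eq_id_iff (hπ : A.IsExo π) :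
    A.exoCompl π = id ↔ ∀ x, π x = A.zero := by
  rw [funext_iff]
  exact forall_congr' fun _ => hA.exoCompl_eq_self_iff hπ

theorem exoSup_exoSup_eq_id_iff {π₁ π₂ π₃ : E → E} (h₁ : A.IsExo π₁) (h₂ : A.IsExo π₂)
    (h₃ : A.IsExo π₃) :
    A.exoSup π₁ (A.exoSup π₂ π₃) = id ↔
      ∀ x, A.exoCompl π₁ (A.exoCompl π₂ (A.exoCompl π₃ x)) = A.zero := by
  have h₂₃ := hA.isExo_comp (hA.isExo_exoCompl h₂) (hA.isExo_exoCompl h₃)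
  rw [exoSup, exoSup, hA.exoCompl_exoCompl h₂₃,
    hA.exoCompl_eq_id_iff (hA.isExo_comp (hA.isExo_exoCompl h₁) h₂₃)]
  rfl

end IsGPEA

theorem exoLe_comp {ζ π ξ : E → E} (hπ : A.exoLe ζ π) (hξ : A.exoLe ζ ξ) :
    A.exoLe ζ (π ∘ ξ) :=
  funext fun x => (hξ.apply_eq x).trans (hπ.apply_eq (ξ x))

theorem exo_apply_eq_cover {γ : E → E → E} (hγ : ∀ a, A.IsExoCover a (γ a)) {π : E → E}
    (hπ : A.IsExo π) (q : E) : π q = γ (π q) q := by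
  rw [((hγ (π q)).2.2 π hπ (hπ.idem q)).apply_eq, (hγ (π q)).2.1]

namespace IsGPEA

variable (hA : A.IsGPEA) {γ : E → E → E} (hγ : ∀ a, A.IsExoCover a (γ a))
include hA hγ

theorem cover_mono {a b : E} (h : A.le a b) : A.exoLe (γ a) (γ b) :=
  (hγ a).2.2 _ (hγ b).1 (hA.exo_fix_of_le (hγ b).1 h (hγ b).2.1)

/-- The inequality `π ∘ γ e ≤ γ (π e)` holds because `γ e` lies below the map
`(γ (π e)' ∘ π)' = γ (π e) ∨ π'`, which fixes `e`. -/
theorem cover_exo_apply {π : E → E} (hπ : A.IsExo π) (e : E) : γ (π e) = π ∘ γ e := by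
  obtain ⟨hg, hge, hgmin⟩ := hγ (π e)
  have hγe := (hγ e).1
  have hg' := hA.isExo_exoCompl hg
  refine hA.exoLe_antisymm (hA.isExo_comp hπ hγe) hg
    (exoLe_comp (hgmin π hπ (hπ.idem e)) (hA.cover_mono hγ (hπ.apply_le e))) ?_
  have hτ' := hA.isExo_comp hg' hπ
  have hτ := hA.isExo_exoCompl hτ'
  have hτe : A.exoCompl (A.exoCompl (γ (π e)) ∘ π) e = e := by
    rw [hA.exoCompl_eq_self_iff hτ', Function.comp_apply]
    exact hA.exoCompl_eq_zero hg hge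
  have hkill := (hA.exoLe_iff hτ hγe).1 ((hγ e).2.2 _ hτ hτe)
  rw [hA.exoCompl_exoCompl hτ'] at hkill
  refine (hA.exoLe_iff hg (hA.isExo_comp hπ hγe)).2 fun x => ?_
  change π (γ e (A.exoCompl (γ (π e)) x)) = A.zero
  rw [hA.exo_comm hπ hγe, hA.exo_comm hπ hg']
  exact hkill x

end IsGPEA

section FiniteSums

variable {ι : Type*} {e : ι → E}

theorem FinsetSumsTo.listSumsTo_toList {F : Finset ι} {s : E} (h : A.FinsetSumsTo e F s) :
    A.ListSumsTo (F.toList.map e) s :=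
  h _ F.nodup_toList (by ext; simp)

theorem FinsetSumsTo.eq_zero_of_empty {s : E} (h : A.FinsetSumsTo e ∅ s) : s = A.zero :=
  h [] List.nodup_nil (by simp)

theorem IsOrthosum.le_of_finsetSumsTo {s : E} (hs : A.IsOrthosum e s) {F : Finset ι} {t : E}
    (ht : A.FinsetSumsTo e F t) : A.le t s :=
  hs.2.1 t ⟨F, ht⟩

namespace IsGPEA

variable (hA : A.IsGPEA)
include hA

theorem listSumsTo_unique {l : List E} {s t : E} (hs : A.ListSumsTo l s)
    (ht : A.ListSumsTo l t) : s = t := by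
  induction l generalizing s t with
  | nil => exact hs.trans ht.symm
  | cons a l ih =>
    obtain ⟨u, hu, hus⟩ := hs
    obtain ⟨v, hv, hvt⟩ := ht
    rw [ih hu hv] at hus
    exact hA.R_unique hus hvt

theorem listSumsTo_map {π : E → E} (hπ : A.IsExo π) {l : List E} {s : E}
    (hs : A.ListSumsTo l s) : A.ListSumsTo (l.map π) (π s) := by
  induction l generalizing s with
  | nil =>
    change s = A.zero at hs
    exact hs ▸ hA.exo_map_zero hπ
  | cons a l ih =>
    obtain ⟨u, hu, hus⟩ := hs
    exact ⟨π u, ih hu, hπ.map_R hus⟩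

theorem listSumsTo_eq_zero {l : List E} {s : E} (hs : A.ListSumsTo l s)
    (hl : ∀ x ∈ l, x = A.zero) : s = A.zero := by
  induction l generalizing s with
  | nil => exact hs
  | cons a l ih =>
    obtain ⟨u, hu, hus⟩ := hs
    rw [hl a List.mem_cons_self, ih hu fun x hx => hl x (List.mem_cons_of_mem a hx)] at hus
    exact hA.eq_of_R_zero_left hus

theorem finsetSumsTo_singleton {i : ι} {t : E} (h : A.FinsetSumsTo e {i} t) : t = e i := by
  obtain ⟨u, hu, hut⟩ := h [i] (List.nodup_singleton i) (by simp)
  change u = A.zero at hu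
  rw [hu] at hut
  exact hA.eq_of_R_zero_right hut

theorem R_of_finsetSumsTo_insert [DecidableEq ι] {F : Finset ι} {j : ι} {t s : E}
    (hj : j ∉ F) (ht : A.FinsetSumsTo e F t) (hs : A.FinsetSumsTo e (insert j F) s) :
    A.R (e j) t s := by
  obtain ⟨u, hu, hus⟩ := hs (j :: F.toList) (List.nodup_cons.2 ⟨by simpa using hj,
    F.nodup_toList⟩) (by ext; simp)
  rwa [hA.listSumsTo_unique hu ht.listSumsTo_toList] at hus

theorem exo_finsetSumsTo_eq_zero {π : E → E} (hπ : A.IsExo π) {F : Finset ι} {t : E}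
    (h : ∀ i ∈ F, π (e i) = A.zero) (ht : A.FinsetSumsTo e F t) : π t = A.zero :=
  hA.listSumsTo_eq_zero (hA.listSumsTo_map hπ ht.listSumsTo_toList) <| by simpa using h

theorem le_orthosum {s : E} (hs : A.IsOrthosum e s) (i : ι) : A.le (e i) s := by
  obtain ⟨t, ht⟩ := hs.1 {i}
  exact hA.finsetSumsTo_singleton ht ▸ hs.le_of_finsetSumsTo ht

end IsGPEA

end FiniteSums

namespace IsGPEA

section Family

variable (hA : A.IsGPEA) {ι : Type*} {e : ι → E} {π : ι → E → E}
  (hexo : ∀ i, A.IsExo (π i)) (hdis : ∀ i j, i ≠ j → A.exoDisjoint (π i) (π j))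
  (hfix : ∀ i, π i (e i) = e i)
include hA hexo hdis hfix

omit hA hexo in
theorem exo_family_ne {i j : ι} (h : i ≠ j) : π i (e j) = A.zero :=
  hfix j ▸ hdis i j h (e j)

theorem exo_finsetSumsTo_of_notMem {j : ι} {F : Finset ι} {t : E} (hj : j ∉ F)
    (ht : A.FinsetSumsTo e F t) : π j t = A.zero :=
  hA.exo_finsetSumsTo_eq_zero (hexo j)
    (fun _ hi => exo_family_ne hdis hfix fun h => hj (h ▸ hi)) ht

theorem exo_finsetSumsTo_of_mem (he : A.IsOrthogonal e) {j : ι} {F : Finset ι} {t : E}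
    (hj : j ∈ F) (ht : A.FinsetSumsTo e F t) : π j t = e j := by
  classical
  obtain ⟨t', ht'⟩ := he (F.erase j)
  have hR : A.R (e j) t' t :=
    hA.R_of_finsetSumsTo_insert (Finset.notMem_erase j F) ht' (by rwa [Finset.insert_erase hj])
  have h := (hexo j).map_R hR
  rw [hfix j, hA.exo_finsetSumsTo_of_notMem hexo hdis hfix (Finset.notMem_erase j F) ht'] at h
  exact hA.eq_of_R_zero_right h

theorem finsetSumsTo_le (he : A.IsOrthogonal e) {b : E} (hb : ∀ j, A.le (e j) (π j b))
    {F : Finset ι} {t : E} (ht : A.FinsetSumsTo e F t) : A.le t b := by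
  classical
  induction F using Finset.induction_on generalizing t with
  | empty => exact ht.eq_zero_of_empty ▸ hA.zero_le b
  | insert j F hj ih =>
    obtain ⟨tF, htF⟩ := he F
    obtain ⟨w, hw⟩ := ih htF
    have hkill : π j tF = A.zero := hA.exo_finsetSumsTo_of_notMem hexo hdis hfix hj htF
    have hbw : π j b = π j w := by
      have h := (hexo j).map_R hw
      rw [hkill] at h
      exact hA.eq_of_R_zero_left h
    obtain ⟨v, hv⟩ := hA.le_trans (hbw ▸ hb j) ((hexo j).apply_le w)
    obtain ⟨m, hm, hmb⟩ := hA.exists_assoc_left hv hw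
    obtain ⟨m', hm', hm''⟩ := (hexo j).perp_of_fix_of_kill (hfix j) hkill
    rw [hA.R_unique hm hm'', hA.R_unique hm' (hA.R_of_finsetSumsTo_insert hj htF ht)] at hmb
    exact ⟨v, hmb⟩

theorem orthosum_le {s : E} (hs : A.IsOrthosum e s) {b : E}
    (hb : ∀ j, A.le (e j) (π j b)) : A.le s b :=
  hs.2.2 b fun _ ⟨_, ht⟩ => hA.finsetSumsTo_le hexo hdis hfix hs.1 hb ht

theorem exo_orthosum {s : E} (hs : A.IsOrthosum e s) (i : ι) : π i s = e i := by
  obtain ⟨m, hm, -⟩ := (hexo i).perp_of_fix_of_kill (hfix i) (hA.exo_exoCompl (hexo i) s)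
  have hsm : A.le s m := hs.2.2 m fun t ⟨F, hF⟩ => by
    have hle : A.le (π i t) (e i) := by
      by_cases hi : i ∈ F
      · exact hA.exo_finsetSumsTo_of_mem hexo hdis hfix hs.1 hi hF ▸ hA.le_refl _
      · exact hA.exo_finsetSumsTo_of_notMem hexo hdis hfix hi hF ▸ hA.zero_le _
    exact hA.add_le_add ((hexo i).R_exoCompl t) hm hle
      ((hA.isExo_exoCompl (hexo i)).le_map_of_le (hs.le_of_finsetSumsTo hF))
  have hei : A.le (e i) (π i s) := hfix i ▸ (hexo i).le_map_of_le (hA.le_orthosum hs i)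
  have hms : A.le m s := hA.add_le_add hm ((hexo i).R_exoCompl s) hei (hA.le_refl _)
  rw [← hA.le_antisymm hsm hms] at hm
  exact hA.cancel_right ((hexo i).R_exoCompl s) hm

theorem eq_zero_of_le_orthosum {s : E} (hs : A.IsOrthosum e s) {d : E} (hd : A.le d s)
    (hk : ∀ i, π i d = A.zero) : d = A.zero := by
  obtain ⟨w, hw⟩ := hd
  have hw' : ∀ i, π i w = e i := fun i => by
    have h := (hexo i).map_R hw
    rw [hk i, hA.exo_orthosum hexo hdis hfix hs i] at h
    exact hA.cancel_left h (hA.R_zero_left (e i))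
  have hsw : A.le s w :=
    hA.orthosum_le hexo hdis hfix hs fun j => hw' j ▸ hA.le_refl _
  rw [← hA.le_antisymm hsw (hA.le_of_R_right hw)] at hw
  exact hA.eq_zero_of_R_self_right hw

theorem perp_finsetSumsTo (he : A.IsOrthogonal e) {b : E} (hb : ∀ i, A.perp b (e i))
    {F : Finset ι} {t : E} (ht : A.FinsetSumsTo e F t) : A.perp b t := by
  classical
  induction F using Finset.induction_on generalizing t with
  | empty => exact ht.eq_zero_of_empty ▸ hA.perp_zero b
  | insert j F hj ih =>
    obtain ⟨tF, htF⟩ := he F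
    exact hA.perp_of_perp_of_R (hexo j) (hfix j)
      (hA.exo_finsetSumsTo_of_notMem hexo hdis hfix hj htF)
      (hA.R_of_finsetSumsTo_insert hj htF ht) (hb j) (ih htF)

end Family

section Orthocomplete

variable (hA : A.IsGPEA) (hCO : A.IsCOGPEA) {ι : Type u} {π : ι → E → E}
  (hexo : ∀ i, A.IsExo (π i)) (hdis : ∀ i j, i ≠ j → A.exoDisjoint (π i) (π j))
include hA hCO hexo hdis

theorem exists_R_orthosum_exo_apply (x : E) :
    ∃ X d, A.IsOrthosum (fun i => π i x) X ∧ A.R X d x ∧ ∀ i, π i d = A.zero := by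
  have hfix : ∀ i, π i (π i x) = π i x := fun i => (hexo i).idem x
  obtain ⟨X, hX⟩ := hCO.1 _ ⟨π, hexo, hdis, hfix⟩
  obtain ⟨d, hd⟩ := hA.orthosum_le hexo hdis hfix hX fun j => hA.le_refl (π j x)
  refine ⟨X, d, hX, hd, fun i => ?_⟩
  have h := (hexo i).map_R hd
  rw [hA.exo_orthosum hexo hdis hfix hX i] at h
  exact hA.eq_zero_of_R_self_left h

theorem isOrthosum_exo_apply {e : ι → E} (hfix : ∀ i, π i (e i) = e i) {s : E}
    (hs : A.IsOrthosum e s) {x : E} (hx : A.le x s) : A.IsOrthosum (fun i => π i x) x := by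
  obtain ⟨X, d, hX, hd, hkill⟩ := hA.exists_R_orthosum_exo_apply hCO hexo hdis x
  rw [hA.eq_zero_of_le_orthosum hexo hdis hfix hs
    (hA.le_trans (hA.le_of_R_right hd) hx) hkill] at hd
  rwa [← hA.eq_of_R_zero_right hd] at hX

end Orthocomplete

section CentralExo

variable (hA : A.IsGPEA) {π : E → E}
include hA

theorem defined_of_defined_exo_apply (hπ : A.IsExo π) {y c : E}
    (h : A.Defined (π y) (π c)) : A.Defined y (π c) := by
  obtain ⟨w, hw⟩ := h
  have hwfix := hA.exo_fix_of_R hπ (hπ.idem y) (hπ.idem c) hw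
  obtain ⟨z, -, hz⟩ := hπ.perp_of_fix_of_kill hwfix (hA.exo_exoCompl hπ y)
  obtain ⟨y', hy', hz'⟩ := hA.exists_assoc_left hw hz
  exact ⟨z, hA.R_unique hy' (hA.R_exoCompl_swap hπ y) ▸ hz'⟩

theorem defined_of_defined_exo_right (hπ : A.IsExo π) {v c : E} (hv : π v = v)
    (h : A.Defined v (π c)) : A.Defined v c := by
  obtain ⟨y, hy⟩ := h
  have hyfix := hA.exo_fix_of_R hπ hv (hπ.idem c) hy
  obtain ⟨w, hw, -⟩ := hπ.perp_of_fix_of_kill hyfix (hA.exo_exoCompl hπ c)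
  obtain ⟨c', hc', hw'⟩ := hA.exists_assoc_right hy hw
  exact ⟨w, hA.R_unique hc' (hπ.R_exoCompl c) ▸ hw'⟩

theorem defined_exo_apply_left (hπ : A.IsExo π) {a c : E} (h : A.Defined a (π c)) :
    A.Defined (π a) c :=
  hA.defined_of_defined_exo_right hπ (hπ.idem a) (hπ.idem c ▸ hπ.map_defined h)

theorem central_exo_apply {c : E} (hc : A.Central c) (hπ : A.IsExo π) :
    A.Central (π c) := by
  obtain ⟨hc₁, hc₂, hc₃, hc₄⟩ := hc
  refine ⟨fun a => ?_, fun a b ha hb => ?_, fun a b s ha hb hs => ?_,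
    fun a b ab ha hb hab => ?_⟩
  · obtain ⟨x₁, x₂, hx₁, hx₂, hx⟩ := hc₁ (π a)
    have hx₁fix := hA.exo_fix_of_le hπ (le_of_R_left hx) (hπ.idem a)
    have hx₂fix := hA.exo_fix_of_le hπ (hA.le_of_R_right hx) (hπ.idem a)
    obtain ⟨a₂, ha₂, ha⟩ := hA.exists_assoc_right hx (hπ.R_exoCompl a)
    have hπa₂ : π a₂ = x₂ := by
      have h := hπ.map_R ha₂
      rw [hx₂fix, hA.exo_exoCompl hπ a] at h
      exact hA.eq_of_R_zero_right h
    refine ⟨x₁, a₂, hx₁fix ▸ hπ.le_map_of_le hx₁, ?_, ha⟩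
    exact hA.defined_of_defined_exo_apply hπ
      (hπa₂ ▸ hA.defined_of_le_right hx₂ (hπ.apply_le c))
  · have hafix := hA.exo_fix_of_le hπ ha (hπ.idem c)
    exact hA.perp_of_perp_of_R hπ (hπ.idem b) (hA.exo_exoCompl hπ b) (hπ.R_exoCompl b)
      (hc₂ a (π b) (hA.le_trans ha (hπ.apply_le c)) (hA.defined_exo_apply_left hπ hb))
      (hπ.perp_of_fix_of_kill hafix (hA.exo_exoCompl hπ b))
  · have hsfix := hA.exo_fix_of_R hπ (hA.exo_fix_of_le hπ ha (hπ.idem c))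
      (hA.exo_fix_of_le hπ hb (hπ.idem c)) hs
    exact hsfix ▸ hπ.le_map_of_le (hc₃ a b s (hA.le_trans ha (hπ.apply_le c))
      (hA.le_trans hb (hπ.apply_le c)) hs)
  · have h := hc₄ (π a) (π b) (π ab) (hA.defined_exo_apply_left hπ ha)
      (hA.defined_exo_apply_left hπ hb) (hπ.map_R hab)
    exact hA.defined_of_defined_exo_apply hπ (hπ.idem ab ▸ hπ.map_defined h)

end CentralExo

section CentralOrthosum

variable (hA : A.IsGPEA) (hCO : A.IsCOGPEA) {ι : Type u} {e : ι → E} {π : ι → E → E}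
  (hexo : ∀ i, A.IsExo (π i)) (hdis : ∀ i j, i ≠ j → A.exoDisjoint (π i) (π j))
  (hfix : ∀ i, π i (e i) = e i) (hc : ∀ i, A.Central (e i)) {s : E} (hs : A.IsOrthosum e s)
include hA hCO hexo hdis hfix hc hs

theorem central_orthosum_split (a : E) :
    ∃ a₁ a₂, A.le a₁ s ∧ A.Defined a₂ s ∧ A.R a₁ a₂ a := by
  choose x y hx hy hxy using fun i => (hc i).1 a
  have hxfix : ∀ i, π i (x i) = x i := fun i =>
    hA.exo_fix_of_le (hexo i) (hx i) (hfix i)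
  obtain ⟨a₁, ha₁⟩ := hCO.1 x ⟨π, hexo, hdis, hxfix⟩
  obtain ⟨a₂, ha₂⟩ : A.le a₁ a := hA.orthosum_le hexo hdis hxfix ha₁ fun j =>
    hxfix j ▸ (hexo j).le_map_of_le (le_of_R_left (hxy j))
  refine ⟨a₁, a₂, hA.orthosum_le hexo hdis hxfix ha₁ fun j =>
      (hA.exo_orthosum hexo hdis hfix hs j).symm ▸ hx j,
    (hCO.2 e s ⟨π, hexo, hdis, hfix⟩ hs a₂).1 fun i => ?_, ha₂⟩
  obtain ⟨r, hr⟩ := hA.le_orthosum ha₁ i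
  obtain ⟨ra, hra, hxa⟩ := hA.exists_assoc_right hr ha₂
  rw [hA.cancel_left hxa (hxy i)] at hra
  exact hA.defined_of_le_left (hy i) (hA.le_of_R_right hra)

/-- The components `π i a` are orthogonal to `b` by (C2) for `e i`, hence so is each
partial orthosum `t` of them; `b ⊕ t = t ⊕ b` then squeezes `a ⊕ b` and `b ⊕ a` together. -/
theorem central_orthosum_perp {a b : E} (ha : A.le a s) (hb : A.Defined b s) :
    A.perp a b := by
  have hfix' : ∀ i, π i (π i a) = π i a := fun i => (hexo i).idem a
  have hgex : A.GEXOrthogonal fun i => π i a := ⟨π, hexo, hdis, hfix'⟩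
  have ha' := hA.isOrthosum_exo_apply hCO hexo hdis hfix hs ha
  have hperp : ∀ i, A.perp (π i a) b := fun i =>
    (hc i).2.1 _ _ (hA.exo_orthosum hexo hdis hfix hs i ▸ (hexo i).le_map_of_le ha)
      (hA.defined_of_le_right hb (hA.le_orthosum hs i))
  obtain ⟨v, hv⟩ := (hCO.2 _ a hgex ha' b).2 fun i =>
    let ⟨w, h, _⟩ := hperp i; ⟨w, h⟩
  obtain ⟨v', hv'⟩ := (hCO.2 _ a hgex ha' b).1 fun i =>
    let ⟨w, _, h⟩ := hperp i; ⟨w, h⟩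
  obtain ⟨e₀, he₀⟩ := hA.exists_R_right hv
  obtain ⟨d, hd⟩ := hA.exists_R_left hv'
  have hpart : ∀ F t, A.FinsetSumsTo (fun i => π i a) F t → A.perp b t := fun _ _ =>
    hA.perp_finsetSumsTo hexo hdis hfix' ha'.1 fun i => perp_comm (hperp i)
  have hae₀ : A.le a e₀ := ha'.2.2 e₀ fun t ⟨F, hF⟩ => by
    obtain ⟨u, hbt, htb⟩ := hpart F t hF
    exact hA.le_of_add_le_add_left hbt he₀
      (hA.add_le_add_right htb hv (ha'.le_of_finsetSumsTo hF))
  have had : A.le a d := ha'.2.2 d fun t ⟨F, hF⟩ => by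
    obtain ⟨u, hbt, htb⟩ := hpart F t hF
    exact hA.le_of_add_le_add_right htb hd
      (hA.add_le_add_left hbt hv' (ha'.le_of_finsetSumsTo hF))
  have hvv' : v = v' := hA.le_antisymm (hA.add_le_add_right hv hd had)
    (hA.add_le_add_left hv' he₀ hae₀)
  exact ⟨v, hv, hvv' ▸ hv'⟩

theorem central_orthosum_add_le {a b s' : E} (ha : A.le a s) (hb : A.le b s)
    (hab : A.R a b s') : A.le s' s := by
  obtain ⟨X, d, hX, hXd, hd⟩ := hA.exists_R_orthosum_exo_apply hCO hexo hdis s'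
  have hfix' : ∀ i, π i (π i s') = π i s' := fun i => (hexo i).idem s'
  obtain ⟨r, hr⟩ : A.le a X := hA.orthosum_le hexo hdis (fun i => (hexo i).idem a)
    (hA.isOrthosum_exo_apply hCO hexo hdis hfix hs ha) fun j =>
      (hA.exo_orthosum hexo hdis hfix' hX j).symm ▸ (hexo j).le_map_of_le (le_of_R_left hab)
  obtain ⟨rd, hrd, hs'⟩ := hA.exists_assoc_right hr hXd
  rw [hA.cancel_left hs' hab] at hrd
  rw [hA.eq_zero_of_le_orthosum hexo hdis hfix hs
    (hA.le_trans (hA.le_of_R_right hrd) hb) hd] at hXd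
  rw [← hA.eq_of_R_zero_right hXd] at hX
  refine hA.orthosum_le hexo hdis hfix' hX fun j => ?_
  rw [hA.exo_orthosum hexo hdis hfix hs j]
  have hle : ∀ {x}, A.le x s → A.le (π j x) (e j) := fun hx =>
    hA.exo_orthosum hexo hdis hfix hs j ▸ (hexo j).le_map_of_le hx
  exact (hc j).2.2.1 _ _ _ (hle ha) (hle hb) ((hexo j).map_R hab)

omit hexo hdis hfix in
theorem central_orthosum_defined_add (hgex : A.GEXOrthogonal e) {a b ab : E}
    (ha : A.Defined a s) (hb : A.Defined b s) (hab : A.R a b ab) : A.Defined ab s :=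
  (hCO.2 e s hgex hs ab).1 fun i => (hc i).2.2.2 a b ab
    (hA.defined_of_le_right ha (hA.le_orthosum hs i))
    (hA.defined_of_le_right hb (hA.le_orthosum hs i)) hab

end CentralOrthosum

theorem central_orthosum (hA : A.IsGPEA) (hCO : A.IsCOGPEA) {ι : Type u} {e : ι → E}
    (hgex : A.GEXOrthogonal e) (hc : ∀ i, A.Central (e i)) {s : E}
    (hs : A.IsOrthosum e s) : A.Central s := by
  obtain ⟨π, hexo, hdis, hfix⟩ := hgex
  exact ⟨hA.central_orthosum_split hCO hexo hdis hfix hc hs,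
    fun _ _ => hA.central_orthosum_perp hCO hexo hdis hfix hc hs,
    fun _ _ _ => hA.central_orthosum_add_le hCO hexo hdis hfix hc hs,
    fun _ _ _ => hA.central_orthosum_defined_add hCO hc hs ⟨π, hexo, hdis, hfix⟩⟩

section Maximal

variable (hA : A.IsGPEA) (hCO : A.IsCOGPEA) {γ : E → E → E}
  (hγ : ∀ a, A.IsExoCover a (γ a)) {Q : Set E} (hQ : A.gammaClosure Q ⊆ Q)
  (hQexo : ∀ π, A.IsExo π → ∀ q ∈ Q, π q ∈ Q)
include hA hCO hγ hQ hQexo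

/-- Take a maximal subset `M ⊆ Q` with pairwise disjoint covers (Zorn) and its orthosum `k`.
A `q ∈ Q` not fixed by `γ k` would make `γ k' q ∈ Q` a new member of `M`. -/
theorem exists_mem_forall_cover_exoLe : ∃ k ∈ Q, ∀ q ∈ Q, A.exoLe (γ q) (γ k) := by
  obtain ⟨M, ⟨hMQ, hMdis⟩, hMmax⟩ := zorn_subset
    {M : Set E | M ⊆ Q ∧ M.Pairwise fun a b => A.exoDisjoint (γ a) (γ b)}
    fun c hcS hc => ⟨⋃₀ c, ⟨Set.sUnion_subset fun m hm => (hcS hm).1,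
      hc.pairwise_sUnion.2 fun m hm => (hcS hm).2⟩, fun _ => Set.subset_sUnion_of_mem⟩
  have hgex : A.GEXOrthogonal ((↑) : M → E) := ⟨fun m => γ m, fun m => (hγ m).1,
    fun i j hij => hMdis i.2 j.2 (Subtype.coe_ne_coe.2 hij), fun m => (hγ m).2.1⟩
  obtain ⟨k, hk⟩ := hCO.1 _ hgex
  have hkγ := (hγ k).1
  have hkγ' := hA.isExo_exoCompl hkγ
  refine ⟨k, hQ ⟨M, _, fun m => hMQ m.2, hgex, hk⟩, fun q hq => (hγ q).2.2 _ hkγ ?_⟩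
  rw [← hA.exoCompl_eq_zero_iff hkγ]
  by_contra hne
  set q' := A.exoCompl (γ k) q
  have hq'k : A.exoDisjoint (γ q') (γ k) :=
    (hA.exoLe_exoCompl_iff hkγ (hγ q').1).1 ((hγ q').2.2 _ hkγ' (hkγ'.idem q))
  have hdis : ∀ m ∈ M, A.exoDisjoint (γ q') (γ m) := fun m hm =>
    hA.exoDisjoint_mono (hγ q').1 (hγ m).1 (hγ q').1 hq'k (hγ q').1.exoLe_refl
      (hA.cover_mono hγ (hA.le_orthosum hk ⟨m, hm⟩))
  have hq'M : q' ∉ M := fun hq'M => hne <| by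
    simpa only [(hγ q').2.1] using hdis q' hq'M q'
  have hins : insert q' M ⊆ M := hMmax ⟨Set.insert_subset (hQexo _ hkγ' q hq) hMQ,
      hMdis.insert fun m hm _ => ⟨hdis m hm, hA.exoDisjoint_comm (hγ q').1 (hγ m).1 (hdis m hm)⟩⟩
    (Set.subset_insert q' M)
  exact hq'M (hins (Set.mem_insert q' M))

theorem exists_mem_eq_cover_of_isExoLUB {g : E → E}
    (hg : A.IsExoLUB {π | ∃ k ∈ Q, π = γ k} g) : ∃ k ∈ Q, g = γ k := by
  obtain ⟨k, hkQ, hk⟩ := hA.exists_mem_forall_cover_exoLe hCO hγ hQ hQexo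
  exact ⟨k, hkQ, hA.exoLe_antisymm (hγ k).1 hg.1
    (hg.2.2 _ (hγ k).1 fun _ ⟨q, hq, hπ⟩ => hπ ▸ hk q hq) (hg.2.1 _ ⟨k, hkQ, rfl⟩)⟩

end Maximal

end IsGPEA

def IsExoPartition (A : PartialAlg E) (π₁ π₂ π₃ : E → E) : Prop :=
  A.IsExo π₁ ∧ A.IsExo π₂ ∧ A.IsExo π₃ ∧
  A.exoDisjoint π₁ π₂ ∧ A.exoDisjoint π₁ π₃ ∧ A.exoDisjoint π₂ π₃ ∧
  A.exoSup π₁ (A.exoSup π₂ π₃) = id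

namespace IsExoPartition

variable {π₁ π₂ π₃ : E → E} (hP : A.IsExoPartition π₁ π₂ π₃) (hA : A.IsGPEA)
include hP hA

theorem exoCompl_exoCompl_exoCompl_eq_zero (x : E) :
    A.exoCompl π₃ (A.exoCompl π₂ (A.exoCompl π₁ x)) = A.zero := by
  obtain ⟨h₁, h₂, h₃, -, -, -, hsup⟩ := hP
  have h₁' := hA.isExo_exoCompl h₁
  have h₂' := hA.isExo_exoCompl h₂
  have h₃' := hA.isExo_exoCompl h₃
  rw [hA.exo_comm h₃' h₂', hA.exo_comm h₃' h₁', hA.exo_comm h₂' h₁']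
  exact (hA.exoSup_exoSup_eq_id_iff h₁ h₂ h₃).1 hsup x

theorem rotate : A.IsExoPartition π₂ π₃ π₁ := by
  have hcov := hP.exoCompl_exoCompl_exoCompl_eq_zero hA
  obtain ⟨h₁, h₂, h₃, h₁₂, h₁₃, h₂₃, -⟩ := hP
  refine ⟨h₂, h₃, h₁, h₂₃, hA.exoDisjoint_comm h₁ h₂ h₁₂, hA.exoDisjoint_comm h₁ h₃ h₁₃,
    (hA.exoSup_exoSup_eq_id_iff h₂ h₃ h₁).2 fun x => ?_⟩
  rw [hA.exo_comm (hA.isExo_exoCompl h₂) (hA.isExo_exoCompl h₃)]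
  exact hcov x

/-- `π₁' x` splits along `π₂` into two parts, both killed by `ξ`: the second one is fixed
by `π₃` because `π₁ ∨ π₂ ∨ π₃ = 1`. -/
theorem exoLe_of_exoDisjoint {ξ : E → E} (hξ : A.IsExo ξ) (h₂ : A.exoDisjoint ξ π₂)
    (h₃ : A.exoDisjoint ξ π₃) : A.exoLe ξ π₁ := by
  have hcov := hP.exoCompl_exoCompl_exoCompl_eq_zero hA
  obtain ⟨h₁, hπ₂, hπ₃, -⟩ := hP
  refine (hA.exoLe_iff h₁ hξ).2 fun x => ?_
  have hfix := (hA.exoCompl_eq_zero_iff hπ₃).1 (hcov x)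
  have h := hξ.map_R (hπ₂.R_exoCompl (A.exoCompl π₁ x))
  rw [h₂, ← hfix, h₃] at h
  exact hA.eq_of_R_zero_left h

theorem apply_eq_of_R_R {x₁ x₂ x₃ m a : E} (hx₁ : x₁ ∈ Set.range π₁)
    (hx₂ : x₂ ∈ Set.range π₂) (hx₃ : x₃ ∈ Set.range π₃) (hm : A.R x₁ x₂ m)
    (ha : A.R m x₃ a) : π₁ a = x₁ ∧ π₂ a = x₂ ∧ π₃ a = x₃ := by
  obtain ⟨h₁, h₂, h₃, h₁₂, h₁₃, h₂₃, -⟩ := hP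
  obtain ⟨u₁, rfl⟩ := hx₁
  obtain ⟨u₂, rfl⟩ := hx₂
  obtain ⟨u₃, rfl⟩ := hx₃
  have hm₁ := h₁.map_R hm
  have ha₁ := h₁.map_R ha
  have hm₂ := h₂.map_R hm
  have ha₂ := h₂.map_R ha
  have hm₃ := h₃.map_R hm
  have ha₃ := h₃.map_R ha
  rw [h₁.idem, h₁₂] at hm₁
  rw [hA.eq_of_R_zero_right hm₁, h₁₃] at ha₁
  rw [hA.exoDisjoint_comm h₁ h₂ h₁₂, h₂.idem] at hm₂
  rw [hA.eq_of_R_zero_left hm₂, h₂₃] at ha₂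
  rw [hA.exoDisjoint_comm h₁ h₃ h₁₃, hA.exoDisjoint_comm h₂ h₃ h₂₃] at hm₃
  rw [hA.eq_of_R_zero_left hm₃, h₃.idem] at ha₃
  exact ⟨hA.eq_of_R_zero_right ha₁, hA.eq_of_R_zero_right ha₂, hA.eq_of_R_zero_left ha₃⟩

theorem existsUnique_decomposition (a : E) :
    ∃! t : E × E × E, t.1 ∈ Set.range π₁ ∧ t.2.1 ∈ Set.range π₂ ∧
      t.2.2 ∈ Set.range π₃ ∧ ∃ m : E, A.R t.1 t.2.1 m ∧ A.R m t.2.2 a := by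
  have hfix := (hA.exoCompl_eq_zero_iff hP.2.2.1).1
    (hP.exoCompl_exoCompl_exoCompl_eq_zero hA a)
  obtain ⟨m, hm, ha⟩ := hA.exists_assoc_left (hP.2.1.R_exoCompl (A.exoCompl π₁ a))
    (hP.1.R_exoCompl a)
  refine existsUnique_of_exists_of_unique
    ⟨(π₁ a, π₂ (A.exoCompl π₁ a), A.exoCompl π₂ (A.exoCompl π₁ a)),
      ⟨a, rfl⟩, ⟨_, rfl⟩, ⟨_, hfix⟩, m, hm, ha⟩ fun t t' ht ht' => ?_
  obtain ⟨hx₁, hx₂, hx₃, m, hm, ha⟩ := ht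
  obtain ⟨hx₁', hx₂', hx₃', m', hm', ha'⟩ := ht'
  obtain ⟨e₁, e₂, e₃⟩ := hP.apply_eq_of_R_R hA hx₁ hx₂ hx₃ hm ha
  obtain ⟨e₁', e₂', e₃'⟩ := hP.apply_eq_of_R_R hA hx₁' hx₂' hx₃' hm' ha'
  exact Prod.ext (e₁.symm.trans e₁') (Prod.ext (e₂.symm.trans e₂') (e₃.symm.trans e₃'))

end IsExoPartition

namespace IsGPEA

variable (hA : A.IsGPEA) {t k : E → E} (ht : A.IsExo t) (hk : A.IsExo k)
  (hle : A.exoLe t k)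
include hA ht hk hle

theorem isExoPartition_of_exoLe :
    A.IsExoPartition t (k ∘ A.exoCompl t) (A.exoCompl k) := by
  have ht' := hA.isExo_exoCompl ht
  have hk' := hA.isExo_exoCompl hk
  have hkt' := hA.isExo_comp hk ht'
  refine ⟨ht, hkt', hk', hA.exoDisjoint_mono ht hkt' ht
      (hA.exoDisjoint_comm ht' ht (hA.exoDisjoint_exoCompl_self ht)) ht.exoLe_refl
      (exoLe_comp_right ht'),
    (hA.exoLe_iff hk ht).1 hle,
    hA.exoDisjoint_mono hkt' hk' hk
      (hA.exoDisjoint_comm hk' hk (hA.exoDisjoint_exoCompl_self hk))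
      (hA.exoLe_comp_left hk ht') hk'.exoLe_refl,
    (hA.exoSup_exoSup_eq_id_iff ht hkt' hk').2 fun x => ?_⟩
  have hkx : (k ∘ A.exoCompl t) (k x) = A.exoCompl t (k x) := by
    rw [Function.comp_apply, hA.exo_comm hk ht', hk.idem]
  rw [hA.exoCompl_exoCompl hk, exoCompl_congr hkx, hA.exoCompl_exoCompl ht]
  exact hA.exoDisjoint_exoCompl_self ht (k x)

end IsGPEA

theorem IsExoPartition.eq_of_exoLe {q₁ q₂ q₃ t k : E → E}
    (hP : A.IsExoPartition q₁ q₂ q₃) (hA : A.IsGPEA) (ht : A.IsExo t) (hk : A.IsExo k)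
    (hle : A.exoLe t k) (h₁ : A.exoLe q₁ t) (h₂ : A.exoLe q₂ k)
    (h₂t : A.exoDisjoint q₂ t) (h₃k : A.exoDisjoint q₃ k) :
    q₁ = t ∧ q₂ = k ∘ A.exoCompl t ∧ q₃ = A.exoCompl k := by
  obtain ⟨hq₁, hq₂, hq₃, -⟩ := id hP
  have ht' := hA.isExo_exoCompl ht
  have hk' := hA.isExo_exoCompl hk
  have hkt' := hA.isExo_comp hk ht'
  have hkq₃ := hA.exoDisjoint_comm hq₃ hk h₃k
  refine ⟨hA.exoLe_antisymm ht hq₁ h₁ ?_, hA.exoLe_antisymm hkt' hq₂ ?_ ?_,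
    hA.exoLe_antisymm hk' hq₃ ((hA.exoLe_exoCompl_iff hk hq₃).2 h₃k) ?_⟩
  · exact hP.exoLe_of_exoDisjoint hA ht (hA.exoDisjoint_comm hq₂ ht h₂t)
      (hA.exoDisjoint_mono ht hq₃ hk hkq₃ hle hq₃.exoLe_refl)
  · exact exoLe_comp h₂ ((hA.exoLe_exoCompl_iff ht hq₂).2 h₂t)
  · exact (hP.rotate hA).exoLe_of_exoDisjoint hA hkt'
      (hA.exoDisjoint_mono hkt' hq₃ hk hkq₃ (hA.exoLe_comp_left hk ht') hq₃.exoLe_refl)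
      (hA.exoDisjoint_mono hkt' hq₁ ht' (hA.exoDisjoint_exoCompl_self ht)
        (exoLe_comp_right ht') h₁)
  · exact ((hP.rotate hA).rotate hA).exoLe_of_exoDisjoint hA hk'
      (hA.exoDisjoint_mono hk' hq₁ hk' (hA.exoDisjoint_exoCompl_self hk) hk'.exoLe_refl
        (exoLe_trans h₁ hle))
      (hA.exoDisjoint_mono hk' hq₂ hk' (hA.exoDisjoint_exoCompl_self hk) hk'.exoLe_refl h₂)

namespace IsTD

variable {γ : E → E → E} {K : Set E}

theorem gammaClosure_subset (hK : A.IsTD γ K) : A.gammaClosure K ⊆ K :=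
  hK.1.symm.subset

theorem exo_apply_mem (hK : A.IsTD γ K) (hγ : ∀ a, A.IsExoCover a (γ a)) {π : E → E}
    (hπ : A.IsExo π) {q : E} (hq : q ∈ K) : π q ∈ K := by
  rw [hK.2]
  exact ⟨π q, q, hq, exo_apply_eq_cover hγ hπ q⟩

theorem gammaClosure_central_subset (hK : A.IsTD γ K) (hA : A.IsGPEA) (hCO : A.IsCOGPEA) :
    A.gammaClosure {k | k ∈ K ∧ A.Central k} ⊆ {k | k ∈ K ∧ A.Central k} :=
  fun _ ⟨ι, e, he, hgex, hs⟩ => ⟨hK.gammaClosure_subset ⟨ι, e, fun i => (he i).1, hgex, hs⟩,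
    hA.central_orthosum hCO hgex (fun i => (he i).2) hs⟩

end IsTD

end GPEApaper.PartialAlg

open GPEApaper PartialAlg in
/-- Theorem 8.1 (fundamental decomposition theorem): for a TD subset K of a
COGPEA E there exist unique pairwise disjoint π₁, π₂, π₃ ∈ ΓEX(E), namely
π₁ = γ_K̃, π₂ = γ_K ∧ (γ_K̃)′, π₃ = (γ_K)′, such that π₁ ∨ π₂ ∨ π₃ = 1
(so E = π₁(E) ⊕ π₂(E) ⊕ π₃(E)), π₁ is type-K, π₂ is locally type-K but
properly non-K, and π₃ is purely non-K. -/
theorem stmt_19 {E : Type u} (A : PartialAlg E) (hA : A.IsGPEA)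
    (hCO : A.IsCOGPEA) (γ : E → E → E)
    (hγ : ∀ a : E, A.IsExoCover a (γ a))
    (K : Set E) (hK : A.IsTD γ K)
    (gK : E → E) (hgK : A.IsExoLUB {π : E → E | ∃ k ∈ K, π = γ k} gK)
    (gKt : E → E)
    (hgKt : A.IsExoLUB {π : E → E | ∃ k, (k ∈ K ∧ A.Central k) ∧ π = γ k} gKt) :
    A.TDDecompProp γ K gK gKt gKt (gK ∘ A.exoCompl gKt) (A.exoCompl gK) ∧
    ∀ q₁ q₂ q₃ : E → E, A.TDDecompProp γ K gK gKt q₁ q₂ q₃ →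
      q₁ = gKt ∧ q₂ = gK ∘ A.exoCompl gKt ∧ q₃ = A.exoCompl gK := by
  have hKexo : ∀ π, A.IsExo π → ∀ q ∈ K, π q ∈ K := fun _ hπ _ => hK.exo_apply_mem hγ hπ
  obtain ⟨k, hkK, rfl⟩ :=
    hA.exists_mem_eq_cover_of_isExoLUB hCO hγ hK.gammaClosure_subset hKexo hgK
  obtain ⟨kt, hktK, rfl⟩ := hA.exists_mem_eq_cover_of_isExoLUB hCO hγ
    (hK.gammaClosure_central_subset hA hCO)
    (fun π hπ q hq => ⟨hKexo π hπ q hq.1, hA.central_exo_apply hq.2 hπ⟩) hgKt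
  have hk := (hγ k).1
  have hkt := (hγ kt).1
  have hkt' := hA.isExo_exoCompl hkt
  have hle : A.exoLe (γ kt) (γ k) := hgK.2.1 _ ⟨kt, hktK.1, rfl⟩
  have hP := hA.isExoPartition_of_exoLe hkt hk hle
  obtain ⟨h₁, h₂, h₃, h₁₂, h₁₃, h₂₃, hsup⟩ := id hP
  refine ⟨⟨h₁, h₂, h₃, h₁₂, h₁₃, h₂₃, hsup, hP.existsUnique_decomposition hA, ⟨kt, hktK, rfl⟩,
    ⟨A.exoCompl (γ kt) k, hKexo _ hkt' k hkK, ?_⟩,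
    hA.exoDisjoint_mono h₂ hkt hkt' (hA.exoDisjoint_exoCompl_self hkt)
      (exoLe_comp_right hkt') hkt.exoLe_refl,
    hA.exoDisjoint_exoCompl_self hk⟩, ?_⟩
  · rw [hA.cover_exo_apply hγ hkt' k]
    exact funext (hA.exo_comm hk hkt')
  · rintro q₁ q₂ q₃ ⟨hq₁, hq₂, hq₃, hq₁₂, hq₁₃, hq₂₃, hqsup, -, ⟨k₁, hk₁, rfl⟩,
      ⟨k₂, hk₂, rfl⟩, hq₂t, hq₃k⟩
    exact IsExoPartition.eq_of_exoLe ⟨hq₁, hq₂, hq₃, hq₁₂, hq₁₃, hq₂₃, hqsup⟩ hA hkt hk hle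
      (hgKt.2.1 _ ⟨k₁, hk₁, rfl⟩) (hgK.2.1 _ ⟨k₂, hk₂, rfl⟩) hq₂t hq₃k
end
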